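/- For the flipped qubit depolarising channel, the coherent information evaluated at the maximally mixed input satisfies I_c(I/2, F_{|+⟩⟨+|}(N_q)) = −(1−q/4)log₂(1/2 − q/8) − (q/4)log₂(q/8) + (3q/4)log₂(q/4) + (1−3q/4)log₂(1−3q/4), and this quantity is strictly positive at q = 1/3. -/

import Mathlib

open Matrix BigOperators Kronecker

noncomputable def plusM : Matrix (Fin 2) (Fin 2) ℂ := Matrix.of fun _ _ => (1 : ℂ) / 2

noncomputable def minusM : Matrix (Fin 2) (Fin 2) ℂ :=
  Matrix.of fun i j => if i = j then (1 : ℂ) / 2 else -((1 : ℂ) / 2)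

def e00 : Matrix (Fin 2) (Fin 2) ℂ := Matrix.of fun i j => if i = 0 ∧ j = 0 then 1 else 0

def e11 : Matrix (Fin 2) (Fin 2) ℂ := Matrix.of fun i j => if i = 1 ∧ j = 1 then 1 else 0

def pX : Matrix (Fin 2) (Fin 2) ℂ := !![0, 1; 1, 0]
def pY : Matrix (Fin 2) (Fin 2) ℂ := !![0, -Complex.I; Complex.I, 0]
def pZ : Matrix (Fin 2) (Fin 2) ℂ := !![1, 0; 0, -1]

/-- Kraus operators of the qubit depolarising channel `N_q`. -/
noncomputable def depolK (q : ℝ) : Fin 4 → Matrix (Fin 2) (Fin 2) ℂ :=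
  ![((Real.sqrt (1 - 3 * q / 4) : ℝ) : ℂ) • 1,
    ((Real.sqrt (q / 4) : ℝ) : ℂ) • pX,
    ((Real.sqrt (q / 4) : ℝ) : ℂ) • pY,
    ((Real.sqrt (q / 4) : ℝ) : ℂ) • pZ]

/-- The Kraus operators of the quantum time flip: `F_i = C_i⊗|0⟩⟨0| + C_iᵀ⊗|1⟩⟨1|`. -/
noncomputable def flipK (C : Matrix (Fin 2) (Fin 2) ℂ) :
    Matrix (Fin 2 × Fin 2) (Fin 2 × Fin 2) ℂ := C ⊗ₖ e00 + Cᵀ ⊗ₖ e11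

/-- The time flip acting on one half of a two-qubit system:
`G_i = (C_i⊗I)⊗|0⟩⟨0| + (C_iᵀ⊗I)⊗|1⟩⟨1|`. -/
noncomputable def flipKext (C : Matrix (Fin 2) (Fin 2) ℂ) :
    Matrix ((Fin 2 × Fin 2) × Fin 2) ((Fin 2 × Fin 2) × Fin 2) ℂ :=
  (C ⊗ₖ (1 : Matrix (Fin 2) (Fin 2) ℂ)) ⊗ₖ e00 + (Cᵀ ⊗ₖ (1 : Matrix (Fin 2) (Fin 2) ℂ)) ⊗ₖ e11

/-- The two-qubit maximally entangled state (purification of `I/2`). -/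
noncomputable def maxEntProj2 : Matrix (Fin 2 × Fin 2) (Fin 2 × Fin 2) ℂ :=
  Matrix.of fun p q => if p.1 = p.2 ∧ q.1 = q.2 then 1 / 2 else 0

/-- The von Neumann entropy (in bits) of a matrix, via its eigenvalues. -/
noncomputable def vNent {n : Type*} [Fintype n] [DecidableEq n] (M : Matrix n n ℂ) : ℝ :=
  if h : M.IsHermitian then -∑ i, h.eigenvalues i * Real.logb 2 (h.eigenvalues i) else 0

/-- The coherent information of the flipped qubit depolarising channel at the maximally
mixed input `I/2`: `I_c = H(F(I/2)) − H((F⊗I)(Φ))`. -/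
noncomputable def IcFlipped (q : ℝ) : ℝ :=
  vNent (∑ i, flipK (depolK q i)
      * (((1 / 2 : ℂ) • (1 : Matrix (Fin 2) (Fin 2) ℂ)) ⊗ₖ plusM) * (flipK (depolK q i))ᴴ)
  - vNent (∑ i, flipKext (depolK q i) * (maxEntProj2 ⊗ₖ plusM) * (flipKext (depolK q i))ᴴ)

/-!
Both channel outputs are real combinations `α • P + β • Q` of two orthogonal projections.
A Kraus operator `C` with `Cᵀ = ±C` is flipped into `C ⊗ 1` or `C ⊗ Z` on the control, so the
control state `|+⟩⟨+|` is kept by `1, X, Z` and turned into `|−⟩⟨−|` by `Y`. Hence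
`F(I/2) = (1/2 - q/8) I ⊗ |+⟩⟨+| + (q/8) I ⊗ |−⟩⟨−|`, and
`(F ⊗ I)(Φ) = (1 - 3q/4) Φ ⊗ |+⟩⟨+| + (q/4) (Φ_X ⊗ |+⟩⟨+| + Φ_Y ⊗ |−⟩⟨−| + Φ_Z ⊗ |+⟩⟨+|)`
with the Bell projections `Φ_C = (C ⊗ 1) Φ (C ⊗ 1)ᴴ`, which are pairwise orthogonal since
`Φ (M ⊗ 1) Φ = (tr M / 2) Φ` and the Pauli matrices are trace-orthogonal.
The eigenvalues of `α • P + β • Q` lie in `{0, α, β}`, and the first two moments `tr A`, `tr A²`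
force the multiplicities of `α` and `β` to be `tr P` and `tr Q`.
-/

open Finset in
theorem sum_comp_eq_of_forall_eq_zero_or_eq_or_eq {ι : Type*} [Fintype ι] {x : ι → ℝ}
    {α β m₁ m₂ : ℝ} (hα : α ≠ 0) (hβ : β ≠ 0) (hαβ : α ≠ β)
    (hx : ∀ i, x i = 0 ∨ x i = α ∨ x i = β)
    (h₁ : ∑ i, x i = m₁ * α + m₂ * β) (h₂ : ∑ i, x i ^ 2 = m₁ * α ^ 2 + m₂ * β ^ 2)
    (g : ℝ → ℝ) (hg : g 0 = 0) : ∑ i, g (x i) = m₁ * g α + m₂ * g β := by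
  classical
  set a : ℝ := ∑ i, if x i = α then 1 else 0
  set b : ℝ := ∑ i, if x i = β then 1 else 0
  have count : ∀ f : ℝ → ℝ, f 0 = 0 → ∑ i, f (x i) = a * f α + b * f β := by
    intro f hf
    simp only [a, b, sum_mul, ← sum_add_distrib]
    refine sum_congr rfl fun i _ => ?_
    rcases hx i with h | h | h <;> simp [h, hf, hα.symm, hβ.symm, hαβ, hαβ.symm]
  have e₁ := h₁.symm.trans (count id rfl)
  have e₂ := h₂.symm.trans (count (· ^ 2) (by simp))
  simp only [id] at e₁
  have ha : a = m₁ := mul_right_cancel₀ (mul_ne_zero hα (sub_ne_zero.mpr hαβ.symm))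
    (by linear_combination e₂ - β * e₁ : a * (α * (β - α)) = m₁ * (α * (β - α)))
  have hb : b = m₂ := mul_right_cancel₀ (mul_ne_zero hβ (sub_ne_zero.mpr hαβ))
    (by linear_combination e₂ - α * e₁ : b * (β * (α - β)) = m₂ * (β * (α - β)))
  rw [count g hg, ha, hb]

namespace Matrix

variable {n : Type*} [Fintype n]

theorem eq_zero_or_eq_or_eq_of_mulVec_eq_smul {P Q : Matrix n n ℂ} (hPP : P * P = P)
    (hQQ : Q * Q = Q) (hPQ : P * Q = 0) (hQP : Q * P = 0) {a b μ : ℂ} {v : n → ℂ} (hv : v ≠ 0)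
    (h : (a • P + b • Q) *ᵥ v = μ • v) : μ = 0 ∨ μ = a ∨ μ = b := by
  have hPA : P * (a • P + b • Q) = a • P := by
    rw [Matrix.mul_add, Matrix.mul_smul, Matrix.mul_smul, hPP, hPQ, smul_zero, add_zero]
  have hQA : Q * (a • P + b • Q) = b • Q := by
    rw [Matrix.mul_add, Matrix.mul_smul, Matrix.mul_smul, hQQ, hQP, smul_zero, zero_add]
  have hP : (μ - a) • (P *ᵥ v) = 0 := by
    rw [sub_smul, ← mulVec_smul, ← h, mulVec_mulVec, hPA, smul_mulVec, sub_self]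
  have hQ : (μ - b) • (Q *ᵥ v) = 0 := by
    rw [sub_smul, ← mulVec_smul, ← h, mulVec_mulVec, hQA, smul_mulVec, sub_self]
  by_contra! hμ
  have hPv := (smul_eq_zero.mp hP).resolve_left (sub_ne_zero.mpr hμ.2.1)
  have hQv := (smul_eq_zero.mp hQ).resolve_left (sub_ne_zero.mpr hμ.2.2)
  rw [add_mulVec, smul_mulVec, smul_mulVec, hPv, hQv, smul_zero, smul_zero, add_zero, eq_comm] at h
  exact hv ((smul_eq_zero.mp h).resolve_left hμ.1)

theorem IsHermitian.trace_mul_self [DecidableEq n] {A : Matrix n n ℂ} (hA : A.IsHermitian) :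
    (A * A).trace = ∑ i, ((hA.eigenvalues i ^ 2 : ℝ) : ℂ) := by
  have hU : star (hA.eigenvectorUnitary : Matrix n n ℂ) * hA.eigenvectorUnitary = 1 :=
    Unitary.star_mul_self_of_mem hA.eigenvectorUnitary.2
  conv_lhs => rw [hA.spectral_theorem, Unitary.conjStarAlgAut_apply]
  rw [show ∀ U D V : Matrix n n ℂ, U * D * V * (U * D * V) = U * (D * (V * U) * D) * V by
      intros; simp only [Matrix.mul_assoc],
    trace_mul_cycle, hU]
  simp [diagonal_mul_diagonal, sq]

end Matrix

open Matrix in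
theorem vNent_smul_add_smul {n : Type*} [Fintype n] [DecidableEq n] {P Q : Matrix n n ℂ}
    (hP : P.IsHermitian) (hQ : Q.IsHermitian) (hPP : P * P = P) (hQQ : Q * Q = Q) (hPQ : P * Q = 0)
    {α β m₁ m₂ : ℝ} (hα : α ≠ 0) (hβ : β ≠ 0) (hαβ : α ≠ β)
    (htrP : P.trace = m₁) (htrQ : Q.trace = m₂) :
    vNent ((α : ℂ) • P + (β : ℂ) • Q)
      = -(m₁ * (α * Real.logb 2 α) + m₂ * (β * Real.logb 2 β)) := by
  have hQP : Q * P = 0 := by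
    simpa [hP.eq, hQ.eq] using congrArg conjTranspose hPQ
  have hA : ((α : ℂ) • P + (β : ℂ) • Q).IsHermitian :=
    (hP.smul (Complex.conj_ofReal α)).add (hQ.smul (Complex.conj_ofReal β))
  have hAA : ((α : ℂ) • P + (β : ℂ) • Q) * ((α : ℂ) • P + (β : ℂ) • Q)
      = ((α ^ 2 : ℝ) : ℂ) • P + ((β ^ 2 : ℝ) : ℂ) • Q := by
    simp only [Matrix.add_mul, Matrix.mul_add, Matrix.smul_mul, Matrix.mul_smul, hPP, hQQ, hPQ,
      hQP, smul_zero, add_zero, zero_add, smul_smul]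
    push_cast; ring_nf
  have hval : ∀ i, hA.eigenvalues i = 0 ∨ hA.eigenvalues i = α ∨ hA.eigenvalues i = β := by
    intro i
    have hv := (WithLp.ofLp_eq_zero 2).ne.2 (hA.eigenvectorBasis.orthonormal.ne_zero i)
    have h := hA.mulVec_eigenvectorBasis i
    rw [RCLike.real_smul_eq_coe_smul (K := ℂ)] at h
    simpa using eq_zero_or_eq_or_eq_of_mulVec_eq_smul hPP hQQ hPQ hQP hv h
  have hsum : ∑ i, hA.eigenvalues i = m₁ * α + m₂ * β := by
    have h := hA.trace_eq_sum_eigenvalues.symm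
    rw [trace_add, trace_smul, trace_smul, htrP, htrQ, smul_eq_mul, smul_eq_mul] at h
    apply Complex.ofReal_injective
    push_cast
    exact h.trans (by ring)
  have hsum_sq : ∑ i, hA.eigenvalues i ^ 2 = m₁ * α ^ 2 + m₂ * β ^ 2 := by
    have h := hA.trace_mul_self.symm
    rw [hAA, trace_add, trace_smul, trace_smul, htrP, htrQ, smul_eq_mul, smul_eq_mul] at h
    apply Complex.ofReal_injective
    push_cast at h ⊢
    rw [h]; ring
  rw [vNent, dif_pos hA, sum_comp_eq_of_forall_eq_zero_or_eq_or_eq hα hβ hαβ hval hsum hsum_sq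
    (fun x => x * Real.logb 2 x) (by simp)]

theorem plusM_isHermitian : plusM.IsHermitian := by
  ext i j; fin_cases i <;> fin_cases j <;> simp [plusM]

theorem minusM_isHermitian : minusM.IsHermitian := by
  ext i j; fin_cases i <;> fin_cases j <;> simp [minusM]

theorem plusM_mul_self : plusM * plusM = plusM := by
  ext i j; fin_cases i <;> fin_cases j <;> simp [plusM, mul_apply]

theorem minusM_mul_self : minusM * minusM = minusM := by
  ext i j; fin_cases i <;> fin_cases j <;> simp [minusM, mul_apply] <;> norm_num

theorem plusM_mul_minusM : plusM * minusM = 0 := by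
  ext i j; fin_cases i <;> fin_cases j <;> simp [plusM, minusM, mul_apply]

theorem minusM_mul_plusM : minusM * plusM = 0 := by
  ext i j; fin_cases i <;> fin_cases j <;> simp [plusM, minusM, mul_apply]

theorem trace_plusM : plusM.trace = 1 := by
  simp [trace_fin_two, plusM]; norm_num

theorem trace_minusM : minusM.trace = 1 := by
  simp [trace_fin_two, minusM]; norm_num

theorem pZ_mul_plusM_mul_conjTranspose : pZ * plusM * pZᴴ = minusM := by
  ext i j; fin_cases i <;> fin_cases j <;> simp [pZ, plusM, minusM, mul_apply, vecHead, vecTail]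

theorem e00_add_e11 : e00 + e11 = 1 := by
  ext i j; fin_cases i <;> fin_cases j <;> simp [e00, e11]

theorem e00_sub_e11 : e00 - e11 = pZ := by
  ext i j; fin_cases i <;> fin_cases j <;> simp [e00, e11, pZ]

theorem transpose_pX : pXᵀ = pX := by
  ext i j; fin_cases i <;> fin_cases j <;> simp [pX]

theorem transpose_pY : pYᵀ = -pY := by
  ext i j; fin_cases i <;> fin_cases j <;> simp [pY]

theorem transpose_pZ : pZᵀ = pZ := by
  ext i j; fin_cases i <;> fin_cases j <;> simp [pZ]

theorem pX_mem_unitary : pX ∈ unitary (Matrix (Fin 2) (Fin 2) ℂ) := by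
  refine Unitary.mem_iff.mpr ⟨?_, ?_⟩ <;> ext i j <;> fin_cases i <;> fin_cases j <;>
    simp [pX, mul_apply]

theorem pY_mem_unitary : pY ∈ unitary (Matrix (Fin 2) (Fin 2) ℂ) := by
  refine Unitary.mem_iff.mpr ⟨?_, ?_⟩ <;> ext i j <;> fin_cases i <;> fin_cases j <;>
    simp [pY, mul_apply]

theorem pZ_mem_unitary : pZ ∈ unitary (Matrix (Fin 2) (Fin 2) ℂ) := by
  refine Unitary.mem_iff.mpr ⟨?_, ?_⟩ <;> ext i j <;> fin_cases i <;> fin_cases j <;>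
    simp [pZ, mul_apply]

theorem Matrix.IsHermitian.kronecker {m n : Type*} {A : Matrix m m ℂ} {B : Matrix n n ℂ}
    (hA : A.IsHermitian) (hB : B.IsHermitian) : (A ⊗ₖ B).IsHermitian := by
  rw [IsHermitian, conjTranspose_kronecker, hA.eq, hB.eq]

theorem Matrix.neg_kronecker {l m n p : Type*} (A : Matrix l m ℂ) (B : Matrix n p ℂ) :
    (-A) ⊗ₖ B = -(A ⊗ₖ B) := by
  ext; simp

theorem kronecker_mul_kronecker_mul_conjTranspose {m n : Type*} [Fintype m] [Fintype n]
    (C σ : Matrix m m ℂ) (D τ : Matrix n n ℂ) :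
    (C ⊗ₖ D) * (σ ⊗ₖ τ) * (C ⊗ₖ D)ᴴ = (C * σ * Cᴴ) ⊗ₖ (D * τ * Dᴴ) := by
  rw [conjTranspose_kronecker, ← mul_kronecker_mul, ← mul_kronecker_mul]

def timeFlip {n : Type*} (C : Matrix n n ℂ) : Matrix (n × Fin 2) (n × Fin 2) ℂ :=
  C ⊗ₖ e00 + Cᵀ ⊗ₖ e11

section TimeFlip

variable {n : Type*} {C : Matrix n n ℂ}

theorem timeFlip_smul (c : ℂ) (C : Matrix n n ℂ) : timeFlip (c • C) = c • timeFlip C := by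
  rw [timeFlip, timeFlip, transpose_smul, smul_kronecker, smul_kronecker, smul_add]

theorem timeFlip_of_transpose_eq [DecidableEq n] (h : Cᵀ = C) : timeFlip C = C ⊗ₖ 1 := by
  rw [timeFlip, h, ← kronecker_add, e00_add_e11]

theorem timeFlip_of_transpose_eq_neg (h : Cᵀ = -C) : timeFlip C = C ⊗ₖ pZ := by
  rw [timeFlip, h, ← e00_sub_e11]
  ext; simp [mul_sub, ← sub_eq_add_neg]

theorem flipK_eq_timeFlip (C : Matrix (Fin 2) (Fin 2) ℂ) : flipK C = timeFlip C := rfl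

theorem transpose_kronecker_one {m : Type*} [DecidableEq m] (C : Matrix n n ℂ) :
    (C ⊗ₖ (1 : Matrix m m ℂ))ᵀ = Cᵀ ⊗ₖ 1 := by
  rw [← kroneckerMap_transpose, transpose_one]

theorem flipKext_eq_timeFlip (C : Matrix (Fin 2) (Fin 2) ℂ) :
    flipKext C = timeFlip (C ⊗ₖ 1) := by
  rw [flipKext, timeFlip, transpose_kronecker_one]

theorem flipKext_smul (c : ℂ) (C : Matrix (Fin 2) (Fin 2) ℂ) :
    flipKext (c • C) = c • flipKext C := by
  rw [flipKext_eq_timeFlip, flipKext_eq_timeFlip, smul_kronecker, timeFlip_smul]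

end TimeFlip

theorem sum_depolK_conj {m : Type*} [Fintype m] (f : Matrix (Fin 2) (Fin 2) ℂ → Matrix m m ℂ)
    (hf : ∀ (c : ℂ) C, f (c • C) = c • f C) (ρ : Matrix m m ℂ) {q : ℝ} (hq₀ : 0 ≤ q)
    (hq₁ : q ≤ 4 / 3) :
    ∑ i, f (depolK q i) * ρ * (f (depolK q i))ᴴ
      = ((1 - 3 * q / 4 : ℝ) : ℂ) • (f 1 * ρ * (f 1)ᴴ)
        + ((q / 4 : ℝ) : ℂ) • (f pX * ρ * (f pX)ᴴ + f pY * ρ * (f pY)ᴴ + f pZ * ρ * (f pZ)ᴴ) := by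
  have conj_smul : ∀ {x : ℝ}, 0 ≤ x → ∀ C, f ((Real.sqrt x : ℂ) • C) * ρ
      * (f ((Real.sqrt x : ℂ) • C))ᴴ = (x : ℂ) • (f C * ρ * (f C)ᴴ) := by
    intro x hx C
    rw [hf, conjTranspose_smul, Matrix.smul_mul, Matrix.smul_mul, Matrix.mul_smul, smul_smul,
      Complex.star_def, Complex.conj_ofReal, ← Complex.ofReal_mul, Real.mul_self_sqrt hx]
  simp only [Fin.sum_univ_four, depolK, Matrix.cons_val]
  rw [conj_smul (by linarith), conj_smul (by linarith), conj_smul (by linarith),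
    conj_smul (by linarith)]
  simp only [smul_add, add_assoc]

theorem unitary_mul_smul_one_mul_conjTranspose {C : Matrix (Fin 2) (Fin 2) ℂ}
    (hC : C ∈ unitary (Matrix (Fin 2) (Fin 2) ℂ)) (c : ℂ) : C * (c • 1) * Cᴴ = c • 1 := by
  rw [Matrix.mul_smul, Matrix.mul_one, Matrix.smul_mul, ← star_eq_conjTranspose,
    Unitary.mul_star_self_of_mem hC]

theorem sum_flipK_depolK_conj {q : ℝ} (hq₀ : 0 ≤ q) (hq₁ : q ≤ 4 / 3) :
    ∑ i, flipK (depolK q i) * (((1 / 2 : ℂ) • (1 : Matrix (Fin 2) (Fin 2) ℂ)) ⊗ₖ plusM)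
        * (flipK (depolK q i))ᴴ
      = ((1 / 2 - q / 8 : ℝ) : ℂ) • ((1 : Matrix (Fin 2) (Fin 2) ℂ) ⊗ₖ plusM)
        + ((q / 8 : ℝ) : ℂ) • ((1 : Matrix (Fin 2) (Fin 2) ℂ) ⊗ₖ minusM) := by
  simp only [flipK_eq_timeFlip]
  rw [sum_depolK_conj timeFlip timeFlip_smul _ hq₀ hq₁, timeFlip_of_transpose_eq transpose_one,
    timeFlip_of_transpose_eq transpose_pX, timeFlip_of_transpose_eq_neg transpose_pY,
    timeFlip_of_transpose_eq transpose_pZ]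
  simp only [kronecker_mul_kronecker_mul_conjTranspose]
  simp only [conjTranspose_one, Matrix.mul_one, Matrix.one_mul,
    unitary_mul_smul_one_mul_conjTranspose pX_mem_unitary,
    unitary_mul_smul_one_mul_conjTranspose pY_mem_unitary,
    unitary_mul_smul_one_mul_conjTranspose pZ_mem_unitary, pZ_mul_plusM_mul_conjTranspose,
    smul_kronecker]
  push_cast
  module

theorem vNent_sum_flipK_depolK_conj {q : ℝ} (hq₀ : 0 < q) (hq₁ : q < 1) :
    vNent (∑ i, flipK (depolK q i) * (((1 / 2 : ℂ) • (1 : Matrix (Fin 2) (Fin 2) ℂ)) ⊗ₖ plusM)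
        * (flipK (depolK q i))ᴴ)
      = -(2 * ((1 / 2 - q / 8) * Real.logb 2 (1 / 2 - q / 8))
        + 2 * (q / 8 * Real.logb 2 (q / 8))) := by
  have htr : ∀ M : Matrix (Fin 2) (Fin 2) ℂ, M.trace = 1 →
      ((1 : Matrix (Fin 2) (Fin 2) ℂ) ⊗ₖ M).trace = ((2 : ℝ) : ℂ) := by
    intro M hM
    rw [trace_kronecker, hM, trace_one]
    norm_num
  rw [sum_flipK_depolK_conj hq₀.le (by linarith)]
  refine vNent_smul_add_smul (isHermitian_one.kronecker plusM_isHermitian)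
    (isHermitian_one.kronecker minusM_isHermitian) ?_ ?_ ?_ (by linarith) (by positivity)
    (by linarith) (htr _ trace_plusM) (htr _ trace_minusM)
  · rw [← mul_kronecker_mul, Matrix.mul_one, plusM_mul_self]
  · rw [← mul_kronecker_mul, Matrix.mul_one, minusM_mul_self]
  · rw [← mul_kronecker_mul, plusM_mul_minusM, kronecker_zero]

theorem maxEntProj2_isHermitian : maxEntProj2.IsHermitian := by
  ext ⟨i, a⟩ ⟨j, b⟩
  simp only [conjTranspose_apply, maxEntProj2, of_apply]
  split_ifs <;> simp_all

theorem maxEntProj2_mul_kronecker_one_mul (M : Matrix (Fin 2) (Fin 2) ℂ) :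
    maxEntProj2 * (M ⊗ₖ 1) * maxEntProj2 = (M.trace / 2) • maxEntProj2 := by
  ext ⟨i, a⟩ ⟨j, b⟩
  fin_cases i <;> fin_cases a <;> fin_cases j <;> fin_cases b <;>
    simp [maxEntProj2, mul_apply, Fintype.sum_prod_type, Fin.sum_univ_two, trace_fin_two,
      one_apply] <;> ring

theorem trace_maxEntProj2 : maxEntProj2.trace = 1 := by
  simp [trace, maxEntProj2, Fintype.sum_prod_type]

noncomputable def bellProj (C : Matrix (Fin 2) (Fin 2) ℂ) :
    Matrix (Fin 2 × Fin 2) (Fin 2 × Fin 2) ℂ :=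
  (C ⊗ₖ 1) * maxEntProj2 * (C ⊗ₖ 1)ᴴ

theorem bellProj_isHermitian (C : Matrix (Fin 2) (Fin 2) ℂ) : (bellProj C).IsHermitian :=
  isHermitian_mul_mul_conjTranspose _ maxEntProj2_isHermitian

theorem bellProj_mul_bellProj (C D : Matrix (Fin 2) (Fin 2) ℂ) :
    bellProj C * bellProj D
      = ((Cᴴ * D).trace / 2) • ((C ⊗ₖ 1) * maxEntProj2 * (D ⊗ₖ 1)ᴴ) := by
  have h : (C ⊗ₖ 1)ᴴ * (D ⊗ₖ (1 : Matrix (Fin 2) (Fin 2) ℂ)) = (Cᴴ * D) ⊗ₖ 1 := by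
    rw [conjTranspose_kronecker, conjTranspose_one, ← mul_kronecker_mul, Matrix.one_mul]
  calc bellProj C * bellProj D
      = (C ⊗ₖ 1) * (maxEntProj2 * ((C ⊗ₖ 1)ᴴ * (D ⊗ₖ 1)) * maxEntProj2) * (D ⊗ₖ 1)ᴴ := by
        simp only [bellProj, Matrix.mul_assoc]
    _ = _ := by
        rw [h, maxEntProj2_mul_kronecker_one_mul, Matrix.mul_smul, Matrix.smul_mul]

section BellProj

variable {C D : Matrix (Fin 2) (Fin 2) ℂ}

theorem bellProj_mul_self (hC : C ∈ unitary (Matrix (Fin 2) (Fin 2) ℂ)) :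
    bellProj C * bellProj C = bellProj C := by
  rw [bellProj_mul_bellProj, ← star_eq_conjTranspose, Unitary.star_mul_self_of_mem hC, trace_one]
  norm_num [bellProj]

theorem bellProj_mul_eq_zero (h : (Cᴴ * D).trace = 0) : bellProj C * bellProj D = 0 := by
  rw [bellProj_mul_bellProj, h, zero_div, zero_smul]

theorem trace_bellProj (hC : C ∈ unitary (Matrix (Fin 2) (Fin 2) ℂ)) :
    (bellProj C).trace = 1 := by
  rw [bellProj, trace_mul_cycle, conjTranspose_kronecker, ← mul_kronecker_mul,
    ← star_eq_conjTranspose, Unitary.star_mul_self_of_mem hC, conjTranspose_one, Matrix.one_mul,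
    one_kronecker_one, Matrix.one_mul, trace_maxEntProj2]

end BellProj

theorem sum_flipKext_depolK_conj {q : ℝ} (hq₀ : 0 ≤ q) (hq₁ : q ≤ 4 / 3) :
    ∑ i, flipKext (depolK q i) * (maxEntProj2 ⊗ₖ plusM) * (flipKext (depolK q i))ᴴ
      = ((1 - 3 * q / 4 : ℝ) : ℂ) • (bellProj 1 ⊗ₖ plusM)
        + ((q / 4 : ℝ) : ℂ) • (bellProj pX ⊗ₖ plusM + bellProj pY ⊗ₖ minusM
          + bellProj pZ ⊗ₖ plusM) := by
  have flip_pY : flipKext pY = (pY ⊗ₖ 1) ⊗ₖ pZ := by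
    rw [flipKext_eq_timeFlip, timeFlip_of_transpose_eq_neg
      (by rw [transpose_kronecker_one, transpose_pY, neg_kronecker])]
  have flip_symm : ∀ C, Cᵀ = C → flipKext C = (C ⊗ₖ 1) ⊗ₖ 1 := fun C hC => by
    rw [flipKext_eq_timeFlip, timeFlip_of_transpose_eq (by rw [transpose_kronecker_one, hC])]
  rw [sum_depolK_conj flipKext flipKext_smul _ hq₀ hq₁, flip_symm 1 transpose_one,
    flip_symm pX transpose_pX, flip_pY, flip_symm pZ transpose_pZ]
  simp only [kronecker_mul_kronecker_mul_conjTranspose]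
  simp only [bellProj, conjTranspose_one, Matrix.mul_one, Matrix.one_mul,
    pZ_mul_plusM_mul_conjTranspose]

theorem vNent_sum_flipKext_depolK_conj {q : ℝ} (hq₀ : 0 < q) (hq₁ : q < 1) :
    vNent (∑ i, flipKext (depolK q i) * (maxEntProj2 ⊗ₖ plusM) * (flipKext (depolK q i))ᴴ)
      = -(1 * ((1 - 3 * q / 4) * Real.logb 2 (1 - 3 * q / 4))
        + 3 * (q / 4 * Real.logb 2 (q / 4))) := by
  have h1 := one_mem (unitary (Matrix (Fin 2) (Fin 2) ℂ))
  have h1X : (1ᴴ * pX).trace = 0 := by simp [pX, trace_fin_two]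
  have h1Z : (1ᴴ * pZ).trace = 0 := by simp [pZ, trace_fin_two]
  have hXZ : (pXᴴ * pZ).trace = 0 := by simp [pX, pZ, trace_fin_two, mul_apply]
  have hZX : (pZᴴ * pX).trace = 0 := by simp [pX, pZ, trace_fin_two, mul_apply]
  rw [sum_flipKext_depolK_conj hq₀.le (by linarith)]
  refine vNent_smul_add_smul ((bellProj_isHermitian 1).kronecker plusM_isHermitian)
    ((((bellProj_isHermitian pX).kronecker plusM_isHermitian).add
      ((bellProj_isHermitian pY).kronecker minusM_isHermitian)).add
      ((bellProj_isHermitian pZ).kronecker plusM_isHermitian)) ?_ ?_ ?_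
    (by linarith) (by positivity) (by linarith) ?_ ?_
  · rw [← mul_kronecker_mul, bellProj_mul_self h1, plusM_mul_self]
  · simp only [Matrix.add_mul, Matrix.mul_add, ← mul_kronecker_mul,
      bellProj_mul_self pX_mem_unitary, bellProj_mul_self pY_mem_unitary,
      bellProj_mul_self pZ_mem_unitary, bellProj_mul_eq_zero hXZ, bellProj_mul_eq_zero hZX,
      plusM_mul_self, minusM_mul_self, plusM_mul_minusM, minusM_mul_plusM, kronecker_zero,
      zero_kronecker, add_zero, zero_add]
  · simp only [Matrix.mul_add, ← mul_kronecker_mul, bellProj_mul_eq_zero h1X,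
      bellProj_mul_eq_zero h1Z, plusM_mul_minusM, kronecker_zero, zero_kronecker, add_zero]
  · rw [trace_kronecker, trace_bellProj h1, trace_plusM]
    norm_num
  · simp only [trace_add, trace_kronecker, trace_bellProj pX_mem_unitary,
      trace_bellProj pY_mem_unitary, trace_bellProj pZ_mem_unitary, trace_plusM, trace_minusM]
    norm_num

noncomputable def flippedDepolIcFormula (q : ℝ) : ℝ :=
  -(1 - q / 4) * Real.logb 2 (1 / 2 - q / 8) - (q / 4) * Real.logb 2 (q / 8)
    + (3 * q / 4) * Real.logb 2 (q / 4) + (1 - 3 * q / 4) * Real.logb 2 (1 - 3 * q / 4)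

theorem IcFlipped_eq {q : ℝ} (hq₀ : 0 < q) (hq₁ : q < 1) :
    IcFlipped q = flippedDepolIcFormula q := by
  rw [IcFlipped, vNent_sum_flipK_depolK_conj hq₀ hq₁, vNent_sum_flipKext_depolK_conj hq₀ hq₁,
    flippedDepolIcFormula]
  ring

theorem flippedDepolIcFormula_one_third :
    flippedDepolIcFormula (1 / 3)
      = Real.logb 2 ((24 / 11) ^ 11 * 24 * (1 / 12) ^ 3 * (3 / 4) ^ 9) / 12 := by
  have h₁ : Real.logb 2 (24 / 11) = -Real.logb 2 (11 / 24) := by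
    rw [← Real.logb_inv]; norm_num
  have h₂ : Real.logb 2 24 = -Real.logb 2 (1 / 24) := by
    rw [← Real.logb_inv]; norm_num
  rw [Real.logb_mul (by positivity) (by positivity), Real.logb_mul (by positivity) (by positivity),
    Real.logb_mul (by positivity) (by positivity), Real.logb_pow, Real.logb_pow, Real.logb_pow,
    h₁, h₂, flippedDepolIcFormula]
  norm_num
  ring

theorem flippedDepolIcFormula_one_third_pos : 0 < flippedDepolIcFormula (1 / 3) := by
  rw [flippedDepolIcFormula_one_third]
  exact div_pos (Real.logb_pos one_lt_two (by norm_num)) (by norm_num)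

/-- The coherent information of the flipped qubit depolarising channel at the maximally
mixed input equals
`−(1−q/4)log₂(1/2−q/8) − (q/4)log₂(q/8) + (3q/4)log₂(q/4) + (1−3q/4)log₂(1−3q/4)`, and
it is strictly positive at `q = 1/3`. -/
theorem coherent_info_flipped_depolarising (q : ℝ) (hq0 : 0 < q) (hq1 : q < 1) :
    IcFlipped q
      = -(1 - q / 4) * Real.logb 2 (1 / 2 - q / 8) - (q / 4) * Real.logb 2 (q / 8)
        + (3 * q / 4) * Real.logb 2 (q / 4) + (1 - 3 * q / 4) * Real.logb 2 (1 - 3 * q / 4)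
    ∧ (q = 1 / 3 → 0 < IcFlipped q) := by
  refine ⟨IcFlipped_eq hq0 hq1, fun hq => ?_⟩
  rw [IcFlipped_eq hq0 hq1, hq]
  exact flippedDepolIcFormula_one_third_pos
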